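/- Suppose F: ℝ → ℂ is measurable with |F(x)| ≤ C·η(x) for x ≥ 0, where η ≥ 0 is nonincreasing with ∫_0^∞ η < ∞, and suppose H ∈ L^∞([0,∞)) ∩ C([0,∞)) solves the integral equation H(x) − ∫_0^∞ H(y)F(x+y) dy = G(x) on [0,∞), where |G(x)| ≤ C̃·η(x). If there exists N > 0 with D(N) := C·∫_N^∞ η(y) dy < 1, then there exists a constant Ĉ > 0 such that |H(x)| ≤ Ĉ·η(x) for all x ≥ 0. -/

import Mathlib

/-!
Let `M` bound `‖H‖` and `D = C ∫_N^∞ η`. Split the integral at `N`: on `(0, N]` the kernel is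
bounded by `C η(x+y) ≤ C η(x)`, so that piece is at most `N M C η(x)`; on `(N, ∞)` an estimate
`‖H‖ ≤ a η + b` is fed back, and monotonicity of `η` turns it into `D (a η(x) + b)`.
Starting from `a = K / (1 - D)`, `b = M` with `K = C̃ + N M C`, every round keeps `a` (it is the
fixed point of `a ↦ K + D a`) and multiplies `b` by `D < 1`, so `b → 0`.
-/

open MeasureTheory Set Filter

theorem norm_setIntegral_union_le_of_norm_le {α E : Type*} [MeasurableSpace α]
    [NormedAddCommGroup E] [NormedSpace ℝ E] {μ : Measure α} {f : α → E} {g₁ g₂ : α → ℝ}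
    {s t : Set α} (hs : MeasurableSet s) (ht : MeasurableSet t) (hst : Disjoint s t)
    (hg₁ : IntegrableOn g₁ s μ) (hg₂ : IntegrableOn g₂ t μ)
    (hf₁ : ∀ x ∈ s, ‖f x‖ ≤ g₁ x) (hf₂ : ∀ x ∈ t, ‖f x‖ ≤ g₂ x) :
    ‖∫ x in s ∪ t, f x ∂μ‖ ≤ (∫ x in s, g₁ x ∂μ) + ∫ x in t, g₂ x ∂μ := by
  classical
  set g := s.piecewise g₁ g₂
  have hg_s : EqOn g g₁ s := fun x hx => piecewise_eq_of_mem s g₁ g₂ hx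
  have hg_t : EqOn g g₂ t := fun x hx => piecewise_eq_of_notMem s g₁ g₂ (hst.notMem_of_mem_right hx)
  have hgs : IntegrableOn g s μ := hg₁.congr_fun hg_s.symm hs
  have hgt : IntegrableOn g t μ := hg₂.congr_fun hg_t.symm ht
  calc ‖∫ x in s ∪ t, f x ∂μ‖ ≤ ∫ x in s ∪ t, g x ∂μ := by
        refine norm_integral_le_of_norm_le (hgs.union hgt) (ae_restrict_of_forall_mem (hs.union ht) ?_)
        rintro x (hx | hx)
        · exact (hf₁ x hx).trans_eq (hg_s hx).symm
        · exact (hf₂ x hx).trans_eq (hg_t hx).symm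
    _ = (∫ x in s, g₁ x ∂μ) + ∫ x in t, g₂ x ∂μ := by
        rw [setIntegral_union hst ht hgs hgt, setIntegral_congr_fun hs hg_s,
          setIntegral_congr_fun ht hg_t]

theorem le_div_one_sub_mul_of_contraction {X : Type*} {s : Set X} {h e : X → ℝ} {K D M : ℝ}
    (hK : 0 ≤ K) (hD₀ : 0 ≤ D) (hD₁ : D < 1) (he : ∀ x ∈ s, 0 ≤ e x) (hM₀ : 0 ≤ M)
    (hM : ∀ x ∈ s, h x ≤ M)
    (step : ∀ a b : ℝ, 0 ≤ a → 0 ≤ b → (∀ y ∈ s, h y ≤ a * e y + b) →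
      ∀ x ∈ s, h x ≤ (K + D * a) * e x + D * b) :
    ∀ x ∈ s, h x ≤ K / (1 - D) * e x := by
  set c := K / (1 - D)
  have hc : 0 ≤ c := div_nonneg hK (by linarith)
  have hfix : K + D * c = c := by
    have : 1 - D ≠ 0 := by linarith
    simp only [c]
    field_simp
    ring
  have iterate : ∀ n : ℕ, ∀ x ∈ s, h x ≤ c * e x + D ^ n * M := by
    intro n
    induction n with
    | zero =>
      intro x hx
      nlinarith [hM x hx, he x hx]
    | succ n ih =>
      intro x hx
      have := step c (D ^ n * M) hc (by positivity) ih x hx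
      rwa [hfix, ← mul_assoc, ← pow_succ'] at this
  intro x hx
  have hlim : Tendsto (fun n : ℕ => c * e x + D ^ n * M) atTop (nhds (c * e x)) := by
    simpa using ((tendsto_pow_atTop_nhds_zero_of_lt_one hD₀ hD₁).mul_const M).const_add (c * e x)
  exact ge_of_tendsto' hlim fun n => iterate n x hx

section IntegralEquation

variable {F H G : ℝ → ℂ} {η : ℝ → ℝ} {C Ctil N M a b : ℝ}

theorem norm_integral_mul_comp_add_le (hC : 0 ≤ C) (hN : 0 ≤ N)
    (hnn : ∀ y, 0 ≤ y → 0 ≤ η y) (hmono : AntitoneOn η (Ici 0))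
    (hηint : IntegrableOn η (Ioi N)) (hFb : ∀ x, 0 ≤ x → ‖F x‖ ≤ C * η x)
    (hM : ∀ y, 0 ≤ y → ‖H y‖ ≤ M) (ha : 0 ≤ a) (hb : 0 ≤ b)
    (hab : ∀ y, 0 ≤ y → ‖H y‖ ≤ a * η y + b) {x : ℝ} (hx : 0 ≤ x) :
    ‖∫ y in Ioi 0, H y * F (x + y)‖ ≤
      N * M * C * η x + C * (∫ y in Ioi N, η y) * (a * η x + b) := by
  have hFx : ∀ y, 0 ≤ y → ‖F (x + y)‖ ≤ C * η (x + y) := fun y hy => hFb _ (by linarith)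
  have hηx : ∀ y, 0 ≤ y → η (x + y) ≤ η x := fun y hy =>
    hmono (mem_Ici.2 hx) (mem_Ici.2 (by linarith)) (by linarith)
  have hηy : ∀ y, 0 ≤ y → η (x + y) ≤ η y := fun y hy =>
    hmono (mem_Ici.2 hy) (mem_Ici.2 (by linarith)) (by linarith)
  have near : ∀ y ∈ Ioc 0 N, ‖H y * F (x + y)‖ ≤ M * C * η x := fun y hy => by
    have hy : 0 ≤ y := hy.1.le
    rw [norm_mul, mul_assoc]
    exact mul_le_mul (hM y hy) ((hFx y hy).trans (by gcongr; exact hηx y hy))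
      (norm_nonneg _) ((norm_nonneg _).trans (hM y hy))
  have far : ∀ y ∈ Ioi N, ‖H y * F (x + y)‖ ≤ C * (a * η x + b) * η y := fun y hy => by
    have hy : 0 ≤ y := hN.trans hy.le
    calc ‖H y * F (x + y)‖ ≤ (a * η y + b) * (C * η (x + y)) := by
          rw [norm_mul]
          exact mul_le_mul (hab y hy) (hFx y hy) (norm_nonneg _)
            ((norm_nonneg _).trans (hab y hy))
      _ = C * (a * η y * η (x + y) + b * η (x + y)) := by ring
      _ ≤ C * (a * η y * η x + b * η y) := by
          have := hnn y hy
          gcongr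
          · exact hηx y hy
          · exact hηy y hy
      _ = C * (a * η x + b) * η y := by ring
  calc ‖∫ y in Ioi 0, H y * F (x + y)‖
      ≤ (∫ _ in Ioc 0 N, M * C * η x) + ∫ y in Ioi N, C * (a * η x + b) * η y := by
        rw [← Ioc_union_Ioi_eq_Ioi hN]
        exact norm_setIntegral_union_le_of_norm_le measurableSet_Ioc measurableSet_Ioi
          (Ioc_disjoint_Ioi le_rfl) (integrableOn_const measure_Ioc_lt_top.ne)
          (hηint.const_mul _) near far
    _ = N * M * C * η x + C * (∫ y in Ioi N, η y) * (a * η x + b) := by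
        rw [setIntegral_const, Real.volume_real_Ioc_of_le hN, integral_const_mul, smul_eq_mul]
        ring

theorem norm_le_of_integral_equation (hC : 0 ≤ C) (hN : 0 ≤ N)
    (hnn : ∀ y, 0 ≤ y → 0 ≤ η y) (hmono : AntitoneOn η (Ici 0))
    (hηint : IntegrableOn η (Ioi N)) (hFb : ∀ x, 0 ≤ x → ‖F x‖ ≤ C * η x)
    (hM : ∀ y, 0 ≤ y → ‖H y‖ ≤ M)
    (heq : ∀ x, 0 ≤ x → H x - (∫ y in Ioi (0:ℝ), H y * F (x + y)) = G x)
    (hGb : ∀ x, 0 ≤ x → ‖G x‖ ≤ Ctil * η x) (ha : 0 ≤ a) (hb : 0 ≤ b)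
    (hab : ∀ y, 0 ≤ y → ‖H y‖ ≤ a * η y + b) {x : ℝ} (hx : 0 ≤ x) :
    ‖H x‖ ≤ (Ctil + N * M * C + C * (∫ y in Ioi N, η y) * a) * η x +
      C * (∫ y in Ioi N, η y) * b := by
  have hH : H x = G x + ∫ y in Ioi 0, H y * F (x + y) := by
    rw [← heq x hx, sub_add_cancel]
  calc ‖H x‖ ≤ ‖G x‖ + ‖∫ y in Ioi 0, H y * F (x + y)‖ := hH ▸ norm_add_le _ _
    _ ≤ Ctil * η x + (N * M * C * η x + C * (∫ y in Ioi N, η y) * (a * η x + b)) :=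
        add_le_add (hGb x hx)
          (norm_integral_mul_comp_add_le hC hN hnn hmono hηint hFb hM ha hb hab hx)
    _ = _ := by ring

end IntegralEquation

theorem apriori_estimate_integral_equation_general
    (F H G : ℝ → ℂ) (η : ℝ → ℝ) (C Ctil N : ℝ)
    (hC : 0 < C) (hCtil : 0 < Ctil) (hN : 0 < N)
    (hnn : ∀ y : ℝ, 0 ≤ y → 0 ≤ η y)
    (hmono : ∀ x y : ℝ, 0 ≤ x → x ≤ y → η y ≤ η x)
    (hηint : IntegrableOn η (Set.Ici 0))
    (hFb : ∀ x : ℝ, 0 ≤ x → ‖F x‖ ≤ C * η x)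
    (hHbdd : ∃ M : ℝ, ∀ x : ℝ, 0 ≤ x → ‖H x‖ ≤ M)
    (heq : ∀ x : ℝ, 0 ≤ x →
      H x - (∫ y in Set.Ioi (0:ℝ), H y * F (x + y)) = G x)
    (hGb : ∀ x : ℝ, 0 ≤ x → ‖G x‖ ≤ Ctil * η x)
    (hD : C * (∫ y in Set.Ioi N, η y) < 1) :
    ∃ Chat : ℝ, 0 < Chat ∧ ∀ x : ℝ, 0 ≤ x → ‖H x‖ ≤ Chat * η x := by
  obtain ⟨M, hM⟩ := hHbdd
  have hM₀ : 0 ≤ M := (norm_nonneg _).trans (hM 0 le_rfl)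
  have hmono' : AntitoneOn η (Ici 0) := fun x hx y _ hxy => hmono x y hx hxy
  have hηint' : IntegrableOn η (Ioi N) := hηint.mono_set (Ioi_subset_Ici hN.le)
  have hD₀ : 0 ≤ C * ∫ y in Ioi N, η y :=
    mul_nonneg hC.le (setIntegral_nonneg measurableSet_Ioi fun y hy => hnn y (hN.trans hy).le)
  have hK : 0 < Ctil + N * M * C := by positivity
  refine ⟨(Ctil + N * M * C) / (1 - C * ∫ y in Ioi N, η y), div_pos hK (by linarith), ?_⟩
  exact le_div_one_sub_mul_of_contraction (s := Ici 0) hK.le hD₀ hD hnn hM₀ hM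
    fun a b ha hb hab x hx =>
      norm_le_of_integral_equation hC.le hN.le hnn hmono' hηint' hFb hM heq hGb ha hb hab hx

/-- A priori estimate: a bounded continuous solution of the integral equation
`H(x) - ∫_0^∞ H(y)F(x+y) dy = G(x)` with `|F| ≤ Cη`, `|G| ≤ C̃η` and a
smallness condition at infinity satisfies `|H(x)| ≤ Ĉ η(x)`. -/
theorem apriori_estimate_integral_equation
    (F H G : ℝ → ℂ) (η : ℝ → ℝ) (C Ctil N : ℝ)
    (hC : 0 < C) (hCtil : 0 < Ctil) (hN : 0 < N)
    (hnn : ∀ y : ℝ, 0 ≤ y → 0 ≤ η y)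
    (hmono : ∀ x y : ℝ, 0 ≤ x → x ≤ y → η y ≤ η x)
    (hηint : IntegrableOn η (Set.Ici 0))
    (hF : Measurable F)
    (hFb : ∀ x : ℝ, 0 ≤ x → ‖F x‖ ≤ C * η x)
    (hHcont : ContinuousOn H (Set.Ici 0))
    (hHbdd : ∃ M : ℝ, ∀ x : ℝ, 0 ≤ x → ‖H x‖ ≤ M)
    (heq : ∀ x : ℝ, 0 ≤ x →
      H x - (∫ y in Set.Ioi (0:ℝ), H y * F (x + y)) = G x)
    (hGb : ∀ x : ℝ, 0 ≤ x → ‖G x‖ ≤ Ctil * η x)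
    (hD : C * (∫ y in Set.Ioi N, η y) < 1) :
    ∃ Chat : ℝ, 0 < Chat ∧ ∀ x : ℝ, 0 ≤ x → ‖H x‖ ≤ Chat * η x :=
  apriori_estimate_integral_equation_general F H G η C Ctil N hC hCtil hN hnn hmono hηint hFb hHbdd
    heq hGb hD
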